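/- Let G be a finite simple graph and F a set of edges of G such that G/F (the graph obtained by contracting the edges of F) is bipartite. Let F' be the set of edges of G whose two endpoints lie in the same connected component of the graph G[F]. Then r(F') ≤ |F| and G \ F' is bipartite. -/

import Mathlib

/-!
Sending each vertex to its component in `G[F]` is a homomorphism from `G \ F'` to `G/F`: an
edge of `G` whose endpoints lie in one component of `G[F]` is in `F'` (its endpoints are not
isolated, hence lie in `esupp F`). So a 2-colouring of `G/F` pulls back to `G \ F'`.

For the rank, count components over all of `V`: vertices outside `esupp F` are isolated, so
`r(F) = |V| - c(F)`. Every edge of `F'` joins vertices already connected by `F`, so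
`c(F') ≥ c(F)`, while adding the edges of `F` one at a time to the empty graph merges at most
one pair of components each time, so `|V| - c(F) ≤ |F|`.
-/

/-- The set of vertices spanned by an edge set (endpoints of its edges). -/
def esupp {V : Type*} (F : Set (Sym2 V)) : Set V := {v | ∃ e ∈ F, v ∈ e}

/-- The number of connected components of the graph with edge set `F`
that meet the vertex set `S`. -/
noncomputable def ncomp {V : Type*} (F : Set (Sym2 V)) (S : Set V) : ℕ :=
  Nat.card {c : (SimpleGraph.fromEdgeSet F).ConnectedComponent //
    ∃ v ∈ S, (SimpleGraph.fromEdgeSet F).connectedComponentMk v = c}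

/-- The rank of an edge set `F`: number of vertices spanned by `F` minus the
number of connected components of the graph `G[F]` (vertex set `esupp F`, edge set `F`). -/
noncomputable def erank {V : Type*} (F : Set (Sym2 V)) : ℕ :=
  Nat.card (esupp F) - ncomp F (esupp F)

/-- The graph `G/F` obtained by contracting all edges of `F`: its vertices are the
connected components of the graph with edge set `F`, two components adjacent if
`G` has an edge between them. -/
def contractE {V : Type*} (G : SimpleGraph V) (F : Set (Sym2 V)) :
    SimpleGraph ((SimpleGraph.fromEdgeSet F).ConnectedComponent) :=
  SimpleGraph.fromRel fun a b =>
    ∃ u v, G.Adj u v ∧ (SimpleGraph.fromEdgeSet F).connectedComponentMk u = a ∧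
      (SimpleGraph.fromEdgeSet F).connectedComponentMk v = b
open SimpleGraph

section

variable {V : Type*}

namespace SimpleGraph

lemma Reachable.of_sup_edge {H : SimpleGraph V} {u v x y : V}
    (h : (H ⊔ edge u v).Reachable x y) :
    H.Reachable x y ∨ (H.Reachable x u ∧ H.Reachable v y) ∨
      (H.Reachable x v ∧ H.Reachable u y) := by
  obtain ⟨p⟩ := h
  induction p with
  | nil => exact .inl .rfl
  | cons hab _ ih =>
    rcases hab with hab | hab
    · have hab := hab.reachable
      rcases ih with h | ⟨h₁, h₂⟩ | ⟨h₁, h₂⟩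
      · exact .inl (hab.trans h)
      · exact .inr (.inl ⟨hab.trans h₁, h₂⟩)
      · exact .inr (.inr ⟨hab.trans h₁, h₂⟩)
    · obtain ⟨⟨rfl, rfl⟩ | ⟨rfl, rfl⟩, -⟩ := (edge_adj ..).mp hab
      · rcases ih with h | ⟨-, h⟩ | ⟨-, h⟩
        · exact .inr (.inl ⟨.rfl, h⟩)
        · exact .inr (.inl ⟨.rfl, h⟩)
        · exact .inl h
      · rcases ih with h | ⟨-, h⟩ | ⟨-, h⟩
        · exact .inr (.inr ⟨.rfl, h⟩)
        · exact .inl h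
        · exact .inr (.inr ⟨.rfl, h⟩)

lemma card_connectedComponent_le_sup_edge_add_one [Finite V] (H : SimpleGraph V) (u v : V) :
    Nat.card H.ConnectedComponent ≤ Nat.card (H ⊔ edge u v).ConnectedComponent + 1 := by
  set f := ConnectedComponent.map (Hom.ofLE (le_sup_left : H ≤ H ⊔ edge u v))
  have hinj : Set.InjOn f {H.connectedComponentMk v}ᶜ := by
    intro c hc c' hc' hcc
    induction c using ConnectedComponent.ind with | h x => ?_
    induction c' using ConnectedComponent.ind with | h y => ?_
    simp only [f, ConnectedComponent.map_mk, Hom.coe_ofLE, id, ConnectedComponent.eq] at hcc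
    rcases hcc.of_sup_edge with h | ⟨-, h⟩ | ⟨h, -⟩
    · exact ConnectedComponent.sound h
    · exact absurd (ConnectedComponent.sound h.symm) hc'
    · exact absurd (ConnectedComponent.sound h) hc
  have := Set.ncard_le_ncard_of_injOn f (fun _ _ => Set.mem_univ _) hinj Set.finite_univ
  have := Set.ncard_add_ncard_compl {H.connectedComponentMk v}
  rw [Set.ncard_singleton, Set.ncard_univ] at *
  omega

lemma card_le_card_connectedComponent_fromEdgeSet_add_card [Finite V] (F : Set (Sym2 V)) :
    Nat.card V ≤ Nat.card (fromEdgeSet F).ConnectedComponent + Nat.card F := by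
  refine Set.Finite.induction_on
    (motive := fun F _ => Nat.card V ≤ Nat.card (fromEdgeSet F).ConnectedComponent + Nat.card F)
    F (Set.toFinite F) ?_ ?_
  · rw [fromEdgeSet_empty, Nat.card_coe_set_eq, Set.ncard_empty, add_zero]
    exact Nat.card_le_card_of_injective _
      fun x y h => reachable_bot.mp (ConnectedComponent.eq.mp h)
  · intro e F he hF ih
    induction e using Sym2.ind with
    | _ u v =>
    have hins : fromEdgeSet (insert s(u, v) F) = fromEdgeSet F ⊔ edge u v := by
      rw [Set.insert_eq, fromEdgeSet_union, sup_comm]; rfl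
    rw [hins, Nat.card_coe_set_eq, Set.ncard_insert_of_notMem he hF, ← Nat.card_coe_set_eq]
    have := (fromEdgeSet F).card_connectedComponent_le_sup_edge_add_one u v
    omega

end SimpleGraph

lemma eq_of_reachable_of_notMem_esupp {F : Set (Sym2 V)} {v w : V} (hv : v ∉ esupp F)
    (h : (fromEdgeSet F).Reachable v w) : v = w := by
  obtain ⟨p⟩ := h
  cases p with
  | nil => rfl
  | cons hadj _ => exact absurd ⟨_, ((fromEdgeSet_adj _).mp hadj).1, Sym2.mem_mk_left _ _⟩ hv

lemma erank_eq_card_sub_card_connectedComponent [Finite V] (F : Set (Sym2 V)) :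
    erank F = Nat.card V - Nat.card (fromEdgeSet F).ConnectedComponent := by
  rw [erank, ncomp, Nat.card_coe_set_eq]
  set S := esupp F
  set mk := (fromEdgeSet F).connectedComponentMk
  have hinj : Set.InjOn mk Sᶜ := fun x hx _ _ h =>
    eq_of_reachable_of_notMem_esupp hx (ConnectedComponent.eq.mp h)
  have hdisj : Disjoint (mk '' S) (mk '' Sᶜ) := by
    refine Set.disjoint_left.mpr ?_
    rintro _ ⟨x, hx, rfl⟩ ⟨y, hy, hxy⟩
    exact hy (eq_of_reachable_of_notMem_esupp hy (ConnectedComponent.eq.mp hxy) ▸ hx)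
  have hcover : mk '' S ∪ mk '' Sᶜ = Set.univ := by
    rw [← Set.image_union, Set.union_compl_self, Set.image_univ]
    exact Set.range_eq_univ.mpr Quot.mk_surjective
  have hV := Set.ncard_add_ncard_compl S
  have hC : (mk '' S).ncard + Sᶜ.ncard = Nat.card (fromEdgeSet F).ConnectedComponent := by
    rw [← hinj.ncard_image, ← Set.ncard_union_eq hdisj, hcover, Set.ncard_univ]
  rw [show Nat.card {c // ∃ v ∈ S, mk v = c} = (mk '' S).ncard from Nat.card_coe_set_eq _]
  omega

lemma card_connectedComponent_le_of_adj_reachable [Finite V] {G H : SimpleGraph V}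
    (h : ∀ ⦃x y⦄, H.Adj x y → G.Reachable x y) :
    Nat.card G.ConnectedComponent ≤ Nat.card H.ConnectedComponent := by
  have hreach {x y : V} (p : H.Walk x y) : G.Reachable x y := by
    induction p with
    | nil => rfl
    | cons hadj _ ih => exact (h hadj).trans ih
  refine Nat.card_le_card_of_surjective
    (ConnectedComponent.lift G.connectedComponentMk fun _ _ p _ =>
      ConnectedComponent.sound (hreach p)) ?_
  exact Quot.ind fun v => ⟨H.connectedComponentMk v, rfl⟩

/-- The edge set `F'` of the statement. -/
def innerEdges (G : SimpleGraph V) (F : Set (Sym2 V)) : Set (Sym2 V) :=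
  {e ∈ G.edgeSet | ∃ u v, e = s(u, v) ∧ u ∈ esupp F ∧ v ∈ esupp F ∧
    (fromEdgeSet F).Reachable u v}

lemma erank_innerEdges_le [Finite V] (G : SimpleGraph V) (F : Set (Sym2 V)) :
    erank (innerEdges G F) ≤ Nat.card F := by
  have hcomp : Nat.card (fromEdgeSet F).ConnectedComponent ≤
      Nat.card (fromEdgeSet (innerEdges G F)).ConnectedComponent := by
    refine card_connectedComponent_le_of_adj_reachable fun x y hxy => ?_
    obtain ⟨⟨-, u, v, huv, -, -, hr⟩, -⟩ := (fromEdgeSet_adj _).mp hxy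
    rcases Sym2.eq_iff.mp huv with ⟨rfl, rfl⟩ | ⟨rfl, rfl⟩
    exacts [hr, hr.symm]
  have := card_le_card_connectedComponent_fromEdgeSet_add_card F
  rw [erank_eq_card_sub_card_connectedComponent]
  omega

def contractHom (G : SimpleGraph V) (F : Set (Sym2 V)) :
    G.deleteEdges (innerEdges G F) →g contractE G F where
  toFun := (fromEdgeSet F).connectedComponentMk
  map_rel' {a b} hab := by
    obtain ⟨hadj, hnot⟩ := deleteEdges_adj.mp hab
    refine (fromRel_adj ..).mpr ⟨fun h => hnot ?_, .inl ⟨a, b, hadj, rfl, rfl⟩⟩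
    have hr := ConnectedComponent.eq.mp h
    refine ⟨hadj, a, b, rfl, ?_, ?_, hr⟩
    · exact by_contra fun ha => hadj.ne (eq_of_reachable_of_notMem_esupp ha hr)
    · exact by_contra fun hb => hadj.ne' (eq_of_reachable_of_notMem_esupp hb hr.symm)

end

theorem stmt1_general {V : Type*} [Fintype V] (G : SimpleGraph V) (F : Set (Sym2 V))
    (hbip : (contractE G F).Colorable 2) :
    erank {e ∈ G.edgeSet | ∃ u v, e = s(u, v) ∧ u ∈ esupp F ∧ v ∈ esupp F ∧
        (SimpleGraph.fromEdgeSet F).Reachable u v} ≤ Nat.card F ∧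
    (G.deleteEdges {e ∈ G.edgeSet | ∃ u v, e = s(u, v) ∧ u ∈ esupp F ∧ v ∈ esupp F ∧
        (SimpleGraph.fromEdgeSet F).Reachable u v}).Colorable 2 :=
  ⟨erank_innerEdges_le G F, hbip.of_hom (contractHom G F)⟩

/-- if contracting `F` makes `G` bipartite, then the set `F'` of edges
of `G` whose endpoints lie in the same component of `G[F]` satisfies `r(F') ≤ |F|`
and `G \ F'` is bipartite. -/
theorem stmt1 {V : Type*} [Fintype V] (G : SimpleGraph V) (F : Set (Sym2 V))
    (hF : F ⊆ G.edgeSet) (hbip : (contractE G F).Colorable 2) :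
    erank {e ∈ G.edgeSet | ∃ u v, e = s(u, v) ∧ u ∈ esupp F ∧ v ∈ esupp F ∧
        (SimpleGraph.fromEdgeSet F).Reachable u v} ≤ Nat.card F ∧
    (G.deleteEdges {e ∈ G.edgeSet | ∃ u v, e = s(u, v) ∧ u ∈ esupp F ∧ v ∈ esupp F ∧
        (SimpleGraph.fromEdgeSet F).Reachable u v}).Colorable 2 :=
  stmt1_general G F hbip
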